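/- Let α, β ∈ ℂ with |α|² + |β|² = 1. For (ξ,η) ∈ ℂ² with δ := −conj(β)·ξ + conj(α) ≠ 0, define the rotation map R(ξ,η) = ((αξ+β)/δ, η/δ²), whose differential at (ξ,η) sends a tangent vector (u,v) ∈ ℂ² to (u/δ², v/δ² + 2·conj(β)·η·u/δ³). Then R is an isometry of the neutral Kähler metric: for all such (ξ,η) and all (u,v) ∈ ℂ², q_{R(ξ,η)}(u/δ², v/δ² + 2·conj(β)·η·u/δ³) = q_{(ξ,η)}(u,v). -/

import Mathlib

/-! Write `D = |δ|²`. The rotation divides `1 + |ξ|²` by `D` (this is where `|α|² + |β|² = 1`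
enters), divides `|u|²` by `D²`, and divides `Im (v ū)` by `D²` up to a correction proportional
to `|u|² Im (β̄ η δ̄)`. That correction is cancelled exactly by the change in `Im (ξ η̄)`, by a
polynomial identity in `α, β, ξ, η`. -/

open Complex ComplexConjugate

/-- The neutral Kähler metric on the space `𝕋 ≅ ℂ²` of oriented lines, as a real
quadratic form on the tangent vector `(u,v)` at the point `(ξ,η)`. -/
noncomputable def q (ξ η : ℂ) (u v : ℂ) : ℝ :=
  -4 * (v * conj u).im / (1 + normSq ξ) ^ 2 -
    8 * (ξ * conj η).im * normSq u / (1 + normSq ξ) ^ 3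

section Rotation

variable {α β ξ η δ : ℂ}

theorem normSq_mul_add_add_normSq_neg_conj_mul_add (α β ξ : ℂ) :
    normSq (α * ξ + β) + normSq (-conj β * ξ + conj α) =
      (normSq α + normSq β) * (1 + normSq ξ) := by
  simp only [normSq_apply, add_re, add_im, mul_re, mul_im, neg_re, neg_im, conj_re, conj_im]
  ring

theorem one_add_normSq_rotation (hαβ : normSq α + normSq β = 1)
    (hδ : δ = -conj β * ξ + conj α) (hδ0 : δ ≠ 0) :
    1 + normSq ((α * ξ + β) / δ) = (1 + normSq ξ) / normSq δ := by
  have h := normSq_mul_add_add_normSq_neg_conj_mul_add α β ξ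
  rw [← hδ, hαβ, one_mul] at h
  rw [normSq_div, ← h]
  field_simp [(normSq_pos.mpr hδ0).ne']
  ring

theorem im_div_mul_conj_div_sq (z w : ℂ) (hδ0 : δ ≠ 0) :
    (z / δ * conj (w / δ ^ 2)).im = (z * conj w * δ).im / normSq δ ^ 2 := by
  have hδ' : conj δ ≠ 0 := by simpa using hδ0
  have h : z / δ * conj (w / δ ^ 2) = ((normSq δ ^ 2)⁻¹ : ℝ) * (z * conj w * δ) := by
    rw [map_div₀, map_pow]
    push_cast
    rw [← mul_conj]
    field_simp
  rw [h, im_ofReal_mul]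
  ring

theorem im_div_sq_add_div_cube_mul_conj_div_sq (u v c : ℂ) (hδ0 : δ ≠ 0) :
    ((v / δ ^ 2 + c * u / δ ^ 3) * conj (u / δ ^ 2)).im =
      (v * conj u).im / normSq δ ^ 2 + normSq u * (c * conj δ).im / normSq δ ^ 3 := by
  have hδ' : conj δ ≠ 0 := by simpa using hδ0
  have h : (v / δ ^ 2 + c * u / δ ^ 3) * conj (u / δ ^ 2) =
      ((normSq δ ^ 2)⁻¹ : ℝ) * (v * conj u) +
        ((normSq u / normSq δ ^ 3 : ℝ) : ℂ) * (c * conj δ) := by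
    rw [map_div₀, map_pow]
    push_cast
    rw [← mul_conj, ← mul_conj]
    field_simp
  rw [h, add_im, im_ofReal_mul, im_ofReal_mul]
  ring

theorem one_add_normSq_mul_im_add_im_rotation (hδ : δ = -conj β * ξ + conj α) :
    (1 + normSq ξ) * (conj β * η * conj δ).im + ((α * ξ + β) * conj η * δ).im =
      normSq δ * (ξ * conj η).im := by
  subst hδ
  simp only [normSq_apply, map_add, map_mul, map_neg, conj_conj, add_re, add_im,
    mul_re, mul_im, neg_re, neg_im, conj_re, conj_im]
  ring

end Rotation

/-- the rotation map `R(ξ,η) = ((αξ+β)/δ, η/δ²)` with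
`δ = −conj(β)ξ + conj(α)` and `|α|² + |β|² = 1`, with differential
`(u,v) ↦ (u/δ², v/δ² + 2·conj(β)·η·u/δ³)`, is an isometry of the
neutral Kähler metric. -/
theorem rotation_is_isometry (α β : ℂ) (hαβ : normSq α + normSq β = 1) :
    ∀ (ξ η : ℂ), ∀ δ : ℂ, δ = -conj β * ξ + conj α → δ ≠ 0 → ∀ u v : ℂ,
      q ((α * ξ + β) / δ) (η / δ ^ 2)
        (u / δ ^ 2) (v / δ ^ 2 + 2 * conj β * η * u / δ ^ 3) = q ξ η u v := by
  intro ξ η δ hδ hδ0 u v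
  have hD : normSq δ ≠ 0 := (normSq_pos.mpr hδ0).ne'
  have hs : 1 + normSq ξ ≠ 0 := by linarith [normSq_nonneg ξ]
  have him : (ξ * conj η).im = ((1 + normSq ξ) * (conj β * η * conj δ).im +
      ((α * ξ + β) * conj η * δ).im) / normSq δ := by
    rw [eq_div_iff hD, mul_comm, one_add_normSq_mul_im_add_im_rotation hδ]
  have htwo : (2 * conj β * η * conj δ).im = 2 * (conj β * η * conj δ).im := by
    simp [mul_assoc]
  rw [q, q, one_add_normSq_rotation hαβ hδ hδ0,
    im_div_sq_add_div_cube_mul_conj_div_sq u v _ hδ0, im_div_mul_conj_div_sq _ _ hδ0,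
    normSq_div, map_pow, htwo, him]
  field_simp
  ring
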